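/- Assume 1/d < δ < 1 − 2/d and a > 2/(d(1−δ)−2). Then ι := 2/(d·a) + δ + 2/d lies in (0,1), and the transfer operator maps C_a into C_{ι·a}: if g ∈ C_a then Lg ≥ 0, ∫ Lg dλ = ∫ g dλ, and |Lg|_δ ≤ ι·a·∫ Lg dλ. -/
import Mathlib


open MeasureTheory

noncomputable section

/-- The cylinder `[w]` of sequences beginning with the word `w` of length `n`. -/
def cylSet (d n : ℕ) (w : Fin n → Fin d) : Set (ℕ → Fin d) :=
  {x | ∀ i : Fin n, x (i : ℕ) = w i}

/-- `osc(g,B) = sup{|g(x)−g(y)| : x,y ∈ B}`. -/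
def oscOn {d : ℕ} (g : (ℕ → Fin d) → ℝ) (B : Set (ℕ → Fin d)) : ℝ :=
  sSup {r : ℝ | ∃ x ∈ B, ∃ y ∈ B, r = |g x - g y|}

/-- The `n`-th term `δ^{-n} Σ_{|w|=n} osc(g,[w])·d^{-n}` of the `δ`-oscillation seminorm
`|g|_δ = sup_n (δ^{-n} Σ_{|w|=n} osc(g,[w])·d^{-n})`; thus `|g|_δ ≤ c` iff
`∀ n, oscTerm d δ g n ≤ c`. -/
def oscTerm (d : ℕ) (δ : ℝ) (g : (ℕ → Fin d) → ℝ) (n : ℕ) : ℝ :=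
  δ ^ (-(n : ℤ)) * ∑ w : Fin n → Fin d, oscOn g (cylSet d n w) * (d : ℝ) ^ (-(n : ℤ))

/-- Prepending a first coordinate: `w·x` is the sequence with first coordinate `w`
and tail `x`. -/
def consSigma (d : ℕ) (w : Fin d) (x : ℕ → Fin d) : ℕ → Fin d :=
  fun n => Nat.casesOn n w x

/-- The transfer operator `(Lg)(x) = (1/d)·Σ_{w=0}^{d−1} g(w·x)`. -/
def transferOp (d : ℕ) (g : (ℕ → Fin d) → ℝ) : (ℕ → Fin d) → ℝ :=
  fun x => (1 / (d : ℝ)) * ∑ w : Fin d, g (consSigma d w x)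

namespace TOCC
variable {d : ℕ}

lemma cyl_nonempty (hd : 0 < d) (n : ℕ) (w : Fin n → Fin d) : (cylSet d n w).Nonempty := by
  refine ⟨fun k => if h : k < n then w ⟨k, h⟩ else ⟨0, hd⟩, fun i => ?_⟩
  simp [i.isLt]

lemma osc_bddAbove {g : (ℕ → Fin d) → ℝ} {C : ℝ} (hC : ∀ x, |g x| ≤ C)
    (B : Set (ℕ → Fin d)) :
    BddAbove {r : ℝ | ∃ x ∈ B, ∃ y ∈ B, r = |g x - g y|} := by
  refine ⟨2 * C, fun r hr => ?_⟩
  obtain ⟨x, _, y, _, rfl⟩ := hr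
  have h1 := hC x; have h2 := hC y
  calc |g x - g y| ≤ |g x| + |g y| := abs_sub _ _
    _ ≤ 2 * C := by linarith

lemma abs_le_osc {g : (ℕ → Fin d) → ℝ} {C : ℝ} (hC : ∀ x, |g x| ≤ C)
    {B : Set (ℕ → Fin d)} {x y : ℕ → Fin d} (hx : x ∈ B) (hy : y ∈ B) :
    |g x - g y| ≤ oscOn g B :=
  le_csSup (osc_bddAbove hC B) ⟨x, hx, y, hy, rfl⟩

lemma osc_nonneg {g : (ℕ → Fin d) → ℝ} {C : ℝ} (hC : ∀ x, |g x| ≤ C)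
    {B : Set (ℕ → Fin d)} (hB : B.Nonempty) : 0 ≤ oscOn g B := by
  obtain ⟨x, hx⟩ := hB
  have := abs_le_osc hC hx hx
  simpa using this

lemma cons_mem_cyl {n : ℕ} {w : Fin n → Fin d} {x : ℕ → Fin d}
    (hx : x ∈ cylSet d n w) (j : Fin d) :
    consSigma d j x ∈ cylSet d (n + 1) (Fin.cons j w) := by
  intro i
  refine Fin.cases ?_ (fun i => ?_) i
  · simp [consSigma]
  · have := hx i
    simpa [consSigma, Fin.cons_succ] using this

lemma osc_transfer_le (hd : 0 < d) {g : (ℕ → Fin d) → ℝ} {C : ℝ} (hC : ∀ x, |g x| ≤ C)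
    (n : ℕ) (w : Fin n → Fin d) :
    oscOn (transferOp d g) (cylSet d n w)
      ≤ (1 / (d : ℝ)) * ∑ j : Fin d, oscOn g (cylSet d (n + 1) (Fin.cons j w)) := by
  have hRHS0 : 0 ≤ (1 / (d : ℝ)) * ∑ j : Fin d, oscOn g (cylSet d (n + 1) (Fin.cons j w)) := by
    refine mul_nonneg (by positivity) (Finset.sum_nonneg fun j _ => ?_)
    exact osc_nonneg hC (cyl_nonempty hd _ _)
  refine Real.sSup_le ?_ hRHS0
  rintro r ⟨x, hx, y, hy, rfl⟩
  have hsplit : transferOp d g x - transferOp d g y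
      = (1 / (d : ℝ)) * ∑ j : Fin d, (g (consSigma d j x) - g (consSigma d j y)) := by
    simp only [transferOp]
    rw [Finset.sum_sub_distrib]
    ring
  rw [hsplit, abs_mul, abs_of_nonneg (by positivity : (0:ℝ) ≤ 1 / (d:ℝ))]
  refine mul_le_mul_of_nonneg_left ?_ (by positivity)
  calc |∑ j : Fin d, (g (consSigma d j x) - g (consSigma d j y))|
      ≤ ∑ j : Fin d, |g (consSigma d j x) - g (consSigma d j y)| :=
        Finset.abs_sum_le_sum_abs _ _
    _ ≤ ∑ j : Fin d, oscOn g (cylSet d (n + 1) (Fin.cons j w)) :=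
        Finset.sum_le_sum fun j _ => abs_le_osc hC (cons_mem_cyl hx j) (cons_mem_cyl hy j)

lemma sum_cons (n : ℕ) (F : (Fin (n + 1) → Fin d) → ℝ) :
    ∑ v : Fin (n + 1) → Fin d, F v
      = ∑ j : Fin d, ∑ w : Fin n → Fin d, F (Fin.cons j w) := by
  rw [← (Fin.consEquiv (fun _ : Fin (n+1) => Fin d)).sum_comp F, Fintype.sum_prod_type]
  rfl

lemma oscTerm_transfer (hd : 0 < d) {δ : ℝ} (hδ : 0 < δ)
    {g : (ℕ → Fin d) → ℝ} {C : ℝ} (hC : ∀ x, |g x| ≤ C) (n : ℕ) :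
    oscTerm d δ (transferOp d g) n ≤ δ * oscTerm d δ g (n + 1) := by
  have hd' : (0:ℝ) < d := by exact_mod_cast hd
  have key : (1 / (d : ℝ)) * ∑ v : Fin (n + 1) → Fin d, oscOn g (cylSet d (n + 1) v)
      = ∑ w : Fin n → Fin d, (1 / (d : ℝ)) * ∑ j : Fin d,
          oscOn g (cylSet d (n + 1) (Fin.cons j w)) := by
    rw [sum_cons n (fun v => oscOn g (cylSet d (n+1) v)), Finset.sum_comm, Finset.mul_sum]
  have hsum : ∑ w : Fin n → Fin d, oscOn (transferOp d g) (cylSet d n w)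
      ≤ (1 / (d : ℝ)) * ∑ v : Fin (n + 1) → Fin d, oscOn g (cylSet d (n + 1) v) := by
    rw [key]
    exact Finset.sum_le_sum fun w _ => osc_transfer_le hd hC n w
  have e1 : oscTerm d δ (transferOp d g) n
      = δ ^ (-(n:ℤ)) * (d:ℝ) ^ (-(n:ℤ)) *
          ∑ w : Fin n → Fin d, oscOn (transferOp d g) (cylSet d n w) := by
    rw [oscTerm, ← Finset.sum_mul]; ring
  have e2 : δ * oscTerm d δ g (n + 1)
      = δ ^ (-(n:ℤ)) * (d:ℝ) ^ (-(n:ℤ)) *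
          ((1 / (d : ℝ)) * ∑ v : Fin (n + 1) → Fin d, oscOn g (cylSet d (n + 1) v)) := by
    rw [oscTerm, ← Finset.sum_mul]
    have hδne : δ ≠ 0 := hδ.ne'
    have hdne : (d:ℝ) ≠ 0 := hd'.ne'
    push_cast
    rw [show (-((n:ℤ)+1)) = -(n:ℤ) + (-1) by ring, zpow_add₀ hδne, zpow_add₀ hdne,
      zpow_neg_one, zpow_neg_one]
    field_simp
  rw [e1, e2]
  exact mul_le_mul_of_nonneg_left hsum (by positivity)

lemma measurable_cylSet (n : ℕ) (w : Fin n → Fin d) : MeasurableSet (cylSet d n w) := by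
  have h : cylSet d n w = ⋂ i : Fin n, (fun x : ℕ → Fin d => x (i : ℕ)) ⁻¹' {w i} := by
    ext x; simp [cylSet]
  rw [h]
  exact MeasurableSet.iInter fun i => (measurable_pi_apply _) (measurableSet_singleton _)

lemma measurable_consSigma (j : Fin d) : Measurable (consSigma d j) := by
  refine measurable_pi_iff.mpr fun k => ?_
  cases k with
  | zero => exact measurable_const
  | succ k => exact measurable_pi_apply k

def cylCol (d : ℕ) : Set (Set (ℕ → Fin d)) := {s | ∃ n, ∃ w : Fin n → Fin d, s = cylSet d n w}

lemma cyl_subset {n m : ℕ} (h : n ≤ m) {w : Fin n → Fin d} {v : Fin m → Fin d}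
    {x : ℕ → Fin d} (hxw : x ∈ cylSet d n w) (hxv : x ∈ cylSet d m v) :
    cylSet d m v ⊆ cylSet d n w := by
  intro y hy i
  have hi : (i : ℕ) < m := lt_of_lt_of_le i.isLt h
  calc y (i : ℕ) = v ⟨(i : ℕ), hi⟩ := hy ⟨(i : ℕ), hi⟩
    _ = x (i : ℕ) := (hxv ⟨(i : ℕ), hi⟩).symm
    _ = w i := hxw i

lemma isPiSystem_cyl : IsPiSystem (cylCol d) := by
  rintro s ⟨n, w, rfl⟩ t ⟨m, v, rfl⟩ hne
  obtain ⟨x, hxw, hxv⟩ := hne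
  rcases le_total n m with h | h
  · exact ⟨m, v, by rw [Set.inter_eq_right.mpr (cyl_subset h hxw hxv)]⟩
  · exact ⟨n, w, by rw [Set.inter_eq_left.mpr (cyl_subset h hxv hxw)]⟩

lemma pi_eq_generateFrom :
    (inferInstance : MeasurableSpace (ℕ → Fin d)) = .generateFrom (cylCol d) := by
  refine le_antisymm ?_ (MeasurableSpace.generateFrom_le ?_)
  · refine iSup_le fun i => ?_
    rw [MeasurableSpace.comap_le_iff_le_map]
    intro s _
    show MeasurableSet[MeasurableSpace.generateFrom (cylCol d)]
      ((fun x : ℕ → Fin d => x i) ⁻¹' s)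
    have hset : (fun x : ℕ → Fin d => x i) ⁻¹' s
        = ⋃ w : Fin (i + 1) → Fin d, ⋃ _ : w (Fin.last i) ∈ s, cylSet d (i + 1) w := by
      ext x
      simp only [Set.mem_preimage, Set.mem_iUnion]
      constructor
      · intro hx
        exact ⟨fun k => x (k : ℕ), hx, fun k => rfl⟩
      · rintro ⟨w, hw, hxw⟩
        have h := hxw (Fin.last i)
        rw [show ((Fin.last i : Fin (i + 1)) : ℕ) = i from rfl] at h
        rw [h]; exact hw
    rw [hset]
    exact MeasurableSet.iUnion fun w => MeasurableSet.iUnion fun hw =>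
      MeasurableSpace.measurableSet_generateFrom ⟨i + 1, w, rfl⟩
  · rintro s ⟨n, w, rfl⟩
    exact measurable_cylSet n w

lemma cylSet_zero (w : Fin 0 → Fin d) : cylSet d 0 w = Set.univ := by
  ext x; simp [cylSet]

lemma preimage_cons_cyl (j : Fin d) (n : ℕ) (w : Fin (n + 1) → Fin d) :
    consSigma d j ⁻¹' cylSet d (n + 1) w
      = if w 0 = j then cylSet d n (fun i => w i.succ) else ∅ := by
  ext x
  simp only [Set.mem_preimage, cylSet, Set.mem_setOf_eq]
  split_ifs with h
  · constructor
    · intro hx i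
      have := hx i.succ
      simpa [consSigma] using this
    · intro hx i
      refine Fin.cases ?_ (fun i => ?_) i
      · simpa [consSigma] using h.symm
      · have := hx i
        simpa [consSigma] using this
  · simp only [Set.mem_empty_iff_false, iff_false]
    intro hx
    have := hx 0
    simp only [consSigma] at this
    exact h (by simpa using this.symm)

lemma mu_eq_lam (hd : 0 < d) (lam : Measure (ℕ → Fin d)) [IsProbabilityMeasure lam]
    (hlam : ∀ (n : ℕ) (w : Fin n → Fin d), lam (cylSet d n w) = ((d : ENNReal))⁻¹ ^ n) :
    ((d : ENNReal))⁻¹ • (∑ j : Fin d, Measure.map (consSigma d j) lam) = lam := by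
  have hdE : (d : ENNReal) ≠ 0 := by exact_mod_cast hd.ne'
  have hdT : (d : ENNReal) ≠ ⊤ := ENNReal.natCast_ne_top d
  set μ : Measure (ℕ → Fin d) :=
    ((d : ENNReal))⁻¹ • (∑ j : Fin d, Measure.map (consSigma d j) lam) with hμ
  have hval : ∀ (n : ℕ) (w : Fin n → Fin d), μ (cylSet d n w) = ((d : ENNReal))⁻¹ ^ n := by
    intro n w
    have happ : μ (cylSet d n w)
        = ((d : ENNReal))⁻¹ * ∑ j : Fin d, lam (consSigma d j ⁻¹' cylSet d n w) := by
      rw [hμ, Measure.smul_apply, Measure.finset_sum_apply, smul_eq_mul]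
      congr 1
      refine Finset.sum_congr rfl fun j _ => ?_
      exact Measure.map_apply (measurable_consSigma j) (measurable_cylSet n w)
    cases n with
    | zero =>
      rw [happ]
      simp only [cylSet_zero, Set.preimage_univ, measure_univ, Finset.sum_const,
        Finset.card_univ, Fintype.card_fin, nsmul_eq_mul, mul_one, pow_zero]
      exact ENNReal.inv_mul_cancel hdE hdT
    | succ n =>
      rw [happ]
      have : ∀ j : Fin d, lam (consSigma d j ⁻¹' cylSet d (n + 1) w)
          = if w 0 = j then ((d : ENNReal))⁻¹ ^ n else 0 := by
        intro j
        rw [preimage_cons_cyl]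
        split_ifs with h
        · exact hlam n _
        · exact measure_empty
      rw [Finset.sum_congr rfl fun j _ => this j, Finset.sum_ite_eq]
      simp [pow_succ, mul_comm]
  have hfin : IsFiniteMeasure μ := by
    constructor
    rw [← cylSet_zero (fun i : Fin 0 => i.elim0 : Fin 0 → Fin d), hval 0]
    simp
  refine ext_of_generate_finite (cylCol d) pi_eq_generateFrom isPiSystem_cyl ?_ ?_
  · rintro s ⟨n, w, rfl⟩
    rw [hval n w, hlam n w]
  · have h0 := hval 0 (fun i => i.elim0)
    rw [cylSet_zero] at h0
    rw [h0, measure_univ, pow_zero]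

lemma integrable_of_bdd {g : (ℕ → Fin d) → ℝ} {C : ℝ} (hg : Measurable g)
    (hC : ∀ x, |g x| ≤ C) (ν : Measure (ℕ → Fin d)) [IsFiniteMeasure ν] :
    Integrable g ν :=
  ⟨hg.aestronglyMeasurable, HasFiniteIntegral.of_bounded (C := C)
    (Filter.Eventually.of_forall fun x => by simpa [Real.norm_eq_abs] using hC x)⟩

lemma integral_transfer (hd : 0 < d) (lam : Measure (ℕ → Fin d)) [IsProbabilityMeasure lam]
    (hlam : ∀ (n : ℕ) (w : Fin n → Fin d), lam (cylSet d n w) = ((d : ENNReal))⁻¹ ^ n)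
    {g : (ℕ → Fin d) → ℝ} {C : ℝ} (hg : Measurable g) (hC : ∀ x, |g x| ≤ C) :
    ∫ x, transferOp d g x ∂lam = ∫ x, g x ∂lam := by
  have hprobj : ∀ j : Fin d, IsProbabilityMeasure (Measure.map (consSigma d j) lam) :=
    fun j => Measure.isProbabilityMeasure_map (measurable_consSigma j).aemeasurable
  have hintj : ∀ j : Fin d, Integrable g (Measure.map (consSigma d j) lam) := fun j => by
    have := hprobj j
    exact integrable_of_bdd hg hC _
  have hcomp : ∀ j : Fin d, Integrable (fun x => g (consSigma d j x)) lam := fun j => by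
    have := hprobj j
    exact (integrable_map_measure hg.aestronglyMeasurable
      (measurable_consSigma j).aemeasurable).mp (hintj j)
  have hmap : ∀ j : Fin d, ∫ x, g (consSigma d j x) ∂lam
      = ∫ y, g y ∂(Measure.map (consSigma d j) lam) := fun j =>
    (integral_map (measurable_consSigma j).aemeasurable hg.aestronglyMeasurable).symm
  have step1 : ∫ x, transferOp d g x ∂lam
      = (1 / (d : ℝ)) * ∑ j : Fin d, ∫ y, g y ∂(Measure.map (consSigma d j) lam) := by
    simp only [transferOp]
    rw [integral_const_mul, integral_finset_sum _ (fun j _ => hcomp j)]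
    exact congrArg _ (Finset.sum_congr rfl fun j _ => hmap j)
  have step2 : ∫ y, g y ∂lam
      = (1 / (d : ℝ)) * ∑ j : Fin d, ∫ y, g y ∂(Measure.map (consSigma d j) lam) := by
    conv_lhs => rw [← mu_eq_lam hd lam hlam]
    rw [integral_smul_measure, integral_finset_sum_measure (fun j _ => hintj j),
      ENNReal.toReal_inv]
    simp [smul_eq_mul, one_div]
  rw [step1, ← step2]

end TOCC

/-- **Cone contraction for the transfer operator.** Assume `1/d < δ < 1 − 2/d` and
`a > 2/(d(1−δ)−2)`. Then `ι := 2/(da) + δ + 2/d ∈ (0,1)`, and `L` maps the cone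
`C_a = {g ≥ 0 bounded measurable : |g|_δ ≤ a ∫ g dλ}` into `C_{ι a}`: for `g ∈ C_a` one has
`Lg ≥ 0`, `∫ Lg dλ = ∫ g dλ`, and `|Lg|_δ ≤ ι·a·∫ Lg dλ`. -/
theorem transfer_operator_cone_contraction (d : ℕ) (hd : 2 ≤ d)
    (δ : ℝ) (hδl : 1 / (d : ℝ) < δ) (hδu : δ < 1 - 2 / (d : ℝ))
    (lam : Measure (ℕ → Fin d)) [IsProbabilityMeasure lam]
    (hlam : ∀ (n : ℕ) (w : Fin n → Fin d), lam (cylSet d n w) = ((d : ENNReal))⁻¹ ^ n)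
    (a : ℝ) (ha : 2 / ((d : ℝ) * (1 - δ) - 2) < a) :
    (0 < 2 / ((d : ℝ) * a) + δ + 2 / (d : ℝ) ∧
      2 / ((d : ℝ) * a) + δ + 2 / (d : ℝ) < 1) ∧
    ∀ g : (ℕ → Fin d) → ℝ, Measurable g → (∃ C : ℝ, ∀ x, |g x| ≤ C) →
      (∀ x, 0 ≤ g x) →
      (∀ n : ℕ, oscTerm d δ g n ≤ a * ∫ x, g x ∂lam) →
      ((∀ x, 0 ≤ transferOp d g x) ∧
        (∫ x, transferOp d g x ∂lam) = ∫ x, g x ∂lam ∧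
        ∀ n : ℕ, oscTerm d δ (transferOp d g) n
          ≤ (2 / ((d : ℝ) * a) + δ + 2 / (d : ℝ)) * a * ∫ x, transferOp d g x ∂lam) := by
  have hd0 : 0 < d := by omega
  have hdR : (0:ℝ) < d := by
    have : (2:ℝ) ≤ (d:ℝ) := by exact_mod_cast hd
    linarith
  have hδ0 : 0 < δ := lt_trans (by positivity) hδl
  have h2d : (2:ℝ) / d * d = 2 := div_mul_cancel₀ 2 hdR.ne'
  have hD : 0 < (d:ℝ) * (1 - δ) - 2 := by
    nlinarith [mul_lt_mul_of_pos_right hδu hdR]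
  have ha0 : 0 < a := lt_trans (div_pos two_pos hD) ha
  have hι0 : 0 < 2 / ((d : ℝ) * a) + δ + 2 / (d : ℝ) :=
    add_pos (add_pos (div_pos two_pos (mul_pos hdR ha0)) hδ0) (div_pos two_pos hdR)
  have hι1 : 2 / ((d : ℝ) * a) + δ + 2 / (d : ℝ) < 1 := by
    have h1 : 2 < a * ((d:ℝ) * (1 - δ) - 2) := (div_lt_iff₀ hD).mp ha
    have h2 : 2 / ((d:ℝ) * a) < ((d:ℝ) * (1 - δ) - 2) / d := by
      rw [div_lt_div_iff₀ (mul_pos hdR ha0) hdR]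
      nlinarith
    have h3 : ((d:ℝ) * (1 - δ) - 2) / d + δ + 2 / d = 1 := by
      field_simp
      ring
    linarith
  refine ⟨⟨hι0, hι1⟩, fun g hg hBdd hpos hosc => ?_⟩
  obtain ⟨C, hC⟩ := hBdd
  have hint := TOCC.integral_transfer hd0 lam hlam hg hC
  refine ⟨fun x => mul_nonneg (by positivity) (Finset.sum_nonneg fun j _ => hpos _),
    hint, fun n => ?_⟩
  have hI : 0 ≤ ∫ x, g x ∂lam := integral_nonneg hpos
  have h1 := TOCC.oscTerm_transfer hd0 hδ0 hC n
  have h2 := hosc (n + 1)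
  have hpos2 : 0 < 2 / ((d : ℝ) * a) + 2 / (d : ℝ) :=
    add_pos (div_pos two_pos (mul_pos hdR ha0)) (div_pos two_pos hdR)
  rw [hint]
  calc oscTerm d δ (transferOp d g) n ≤ δ * oscTerm d δ g (n + 1) := h1
    _ ≤ δ * (a * ∫ x, g x ∂lam) := mul_le_mul_of_nonneg_left h2 hδ0.le
    _ ≤ (2 / ((d : ℝ) * a) + δ + 2 / (d : ℝ)) * a * ∫ x, g x ∂lam := by
        nlinarith [mul_nonneg (mul_nonneg hpos2.le ha0.le) hI]

end
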